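/- arXiv:2507.11161 — 2 statements merged into one kernel-verified Lean document; each statement's English description precedes it below -/
import Mathlib

section
/- The log-sum-exp function g(z) = log(Σ_{i=1}^d exp(z_i)) on R^d is convex and 1/2-smooth, i.e., its gradient is (1/2)-Lipschitz with respect to the Euclidean norm. -/
open Real Finset

-- Popoviciu-style variance bound
lemma stmt2_var_le {d : ℕ} (hd : 0 < d) (p a : Fin d → ℝ) (hp : ∀ i, 0 ≤ p i)
    (hp1 : ∑ i, p i = 1) :
    ∑ i, p i * (a i - ∑ j, p j * a j) ^ 2 ≤ (1 / 2) * ∑ i, a i ^ 2 := by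
  haveI : Nonempty (Fin d) := ⟨⟨0, hd⟩⟩
  obtain ⟨i₀, -, hmax⟩ := Finset.exists_max_image Finset.univ a ⟨_, Finset.mem_univ (Classical.arbitrary _)⟩
  obtain ⟨i₁, -, hmin⟩ := Finset.exists_min_image Finset.univ a ⟨_, Finset.mem_univ (Classical.arbitrary _)⟩
  set m := ∑ j, p j * a j with hm
  set c := (a i₀ + a i₁) / 2 with hc
  have expand : ∀ t : ℝ, ∑ i, p i * (a i - t) ^ 2
      = (∑ i, p i * a i ^ 2) - 2 * t * m + t ^ 2 := by
    intro t
    have h1 : ∀ i ∈ Finset.univ, p i * (a i - t) ^ 2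
        = p i * a i ^ 2 - 2 * t * (p i * a i) + t ^ 2 * p i := fun i _ => by ring
    rw [Finset.sum_congr rfl h1, Finset.sum_add_distrib, Finset.sum_sub_distrib,
      ← Finset.mul_sum, ← Finset.mul_sum, hp1, ← hm]
    ring
  have key : ∑ i, p i * (a i - m) ^ 2 ≤ ∑ i, p i * (a i - c) ^ 2 := by
    rw [expand m, expand c]; nlinarith [sq_nonneg (m - c)]
  have hK : ∀ i, (a i - c) ^ 2 ≤ ((a i₀ - a i₁) / 2) ^ 2 := by
    intro i
    have h1 := hmax i (Finset.mem_univ i)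
    have h2 := hmin i (Finset.mem_univ i)
    rw [hc]
    nlinarith [mul_nonneg (sub_nonneg.2 h1) (sub_nonneg.2 h2)]
  have step3 : ∑ i, p i * (a i - c) ^ 2 ≤ ((a i₀ - a i₁) / 2) ^ 2 := by
    calc ∑ i, p i * (a i - c) ^ 2 ≤ ∑ i, p i * ((a i₀ - a i₁) / 2) ^ 2 :=
        Finset.sum_le_sum fun i _ => mul_le_mul_of_nonneg_left (hK i) (hp i)
      _ = ((a i₀ - a i₁) / 2) ^ 2 := by rw [← Finset.sum_mul, hp1, one_mul]
  have step4 : ((a i₀ - a i₁) / 2) ^ 2 ≤ (1 / 2) * ∑ i, a i ^ 2 := by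
    rcases eq_or_ne i₀ i₁ with h | h
    · rw [h]
      have : ((a i₁ - a i₁) / 2) ^ 2 = 0 := by ring
      rw [this]
      positivity
    · have hpair : a i₀ ^ 2 + a i₁ ^ 2 ≤ ∑ i, a i ^ 2 := by
        have hps := Finset.sum_pair (f := fun i => a i ^ 2) h
        rw [← hps]
        exact Finset.sum_le_sum_of_subset_of_nonneg (Finset.subset_univ _)
          (fun i _ _ => sq_nonneg _)
      nlinarith [sq_nonneg (a i₀ + a i₁)]
  linarith

lemma stmt2_cov_le {d : ℕ} (hd : 0 < d) (p a b : Fin d → ℝ) (hp : ∀ i, 0 ≤ p i)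
    (hp1 : ∑ i, p i = 1) :
    (∑ i, p i * a i * b i) - (∑ i, p i * a i) * (∑ i, p i * b i)
      ≤ (1 / 2) * (Real.sqrt (∑ i, a i ^ 2) * Real.sqrt (∑ i, b i ^ 2)) := by
  set ma := ∑ i, p i * a i with hma
  set mb := ∑ i, p i * b i with hmb
  set X := ∑ i, p i * (a i - ma) ^ 2 with hX
  set Y := ∑ i, p i * (b i - mb) ^ 2 with hY
  have hXnn : 0 ≤ X := Finset.sum_nonneg fun i _ => mul_nonneg (hp i) (sq_nonneg _)
  have hYnn : 0 ≤ Y := Finset.sum_nonneg fun i _ => mul_nonneg (hp i) (sq_nonneg _)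
  have hcov : (∑ i, p i * a i * b i) - ma * mb
      = ∑ i, (Real.sqrt (p i) * (a i - ma)) * (Real.sqrt (p i) * (b i - mb)) := by
    have h1 : ∀ i ∈ Finset.univ, (Real.sqrt (p i) * (a i - ma)) * (Real.sqrt (p i) * (b i - mb))
        = p i * a i * b i - (p i * a i) * mb - ma * (p i * b i) + ma * mb * p i := by
      intro i _
      have hsq : Real.sqrt (p i) * Real.sqrt (p i) = p i := Real.mul_self_sqrt (hp i)
      calc (Real.sqrt (p i) * (a i - ma)) * (Real.sqrt (p i) * (b i - mb))
          = (Real.sqrt (p i) * Real.sqrt (p i)) * ((a i - ma) * (b i - mb)) := by ring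
        _ = p i * a i * b i - (p i * a i) * mb - ma * (p i * b i) + ma * mb * p i := by
            rw [hsq]; ring
    rw [Finset.sum_congr rfl h1, Finset.sum_add_distrib, Finset.sum_sub_distrib,
      Finset.sum_sub_distrib, ← Finset.sum_mul, ← Finset.mul_sum, ← Finset.mul_sum, hp1,
      ← hma, ← hmb]
    ring
  have hf2 : ∑ i, (Real.sqrt (p i) * (a i - ma)) ^ 2 = X := by
    refine Finset.sum_congr rfl fun i _ => ?_
    rw [mul_pow, Real.sq_sqrt (hp i)]
  have hg2 : ∑ i, (Real.sqrt (p i) * (b i - mb)) ^ 2 = Y := by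
    refine Finset.sum_congr rfl fun i _ => ?_
    rw [mul_pow, Real.sq_sqrt (hp i)]
  have hCS : (∑ i, (Real.sqrt (p i) * (a i - ma)) * (Real.sqrt (p i) * (b i - mb))) ^ 2
      ≤ X * Y := by
    have := Finset.sum_mul_sq_le_sq_mul_sq Finset.univ
      (fun i => Real.sqrt (p i) * (a i - ma)) (fun i => Real.sqrt (p i) * (b i - mb))
    rw [hf2, hg2] at this
    exact this
  have h4 : (∑ i, (Real.sqrt (p i) * (a i - ma)) * (Real.sqrt (p i) * (b i - mb)))
      ≤ Real.sqrt X * Real.sqrt Y := by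
    calc (∑ i, (Real.sqrt (p i) * (a i - ma)) * (Real.sqrt (p i) * (b i - mb)))
        ≤ |∑ i, (Real.sqrt (p i) * (a i - ma)) * (Real.sqrt (p i) * (b i - mb))| := le_abs_self _
      _ = Real.sqrt ((∑ i, (Real.sqrt (p i) * (a i - ma)) * (Real.sqrt (p i) * (b i - mb))) ^ 2) :=
          (Real.sqrt_sq_eq_abs _).symm
      _ ≤ Real.sqrt (X * Y) := Real.sqrt_le_sqrt hCS
      _ = Real.sqrt X * Real.sqrt Y := Real.sqrt_mul hXnn _
  have hXb : Real.sqrt X ≤ Real.sqrt ((1/2) * ∑ i, a i ^ 2) :=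
    Real.sqrt_le_sqrt (stmt2_var_le hd p a hp hp1)
  have hYb : Real.sqrt Y ≤ Real.sqrt ((1/2) * ∑ i, b i ^ 2) :=
    Real.sqrt_le_sqrt (stmt2_var_le hd p b hp hp1)
  have hfin : Real.sqrt ((1/2) * ∑ i, a i ^ 2) * Real.sqrt ((1/2) * ∑ i, b i ^ 2)
      = (1/2) * (Real.sqrt (∑ i, a i ^ 2) * Real.sqrt (∑ i, b i ^ 2)) := by
    rw [Real.sqrt_mul (by norm_num : (0:ℝ) ≤ 1/2), Real.sqrt_mul (by norm_num : (0:ℝ) ≤ 1/2)]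
    calc Real.sqrt (1/2) * Real.sqrt (∑ i, a i ^ 2) * (Real.sqrt (1/2) * Real.sqrt (∑ i, b i ^ 2))
        = (Real.sqrt (1/2) * Real.sqrt (1/2)) * (Real.sqrt (∑ i, a i ^ 2) * Real.sqrt (∑ i, b i ^ 2)) := by ring
      _ = (1/2) * (Real.sqrt (∑ i, a i ^ 2) * Real.sqrt (∑ i, b i ^ 2)) := by
          rw [Real.mul_self_sqrt (by norm_num : (0:ℝ) ≤ 1/2)]
  calc (∑ i, p i * a i * b i) - ma * mb
      = ∑ i, (Real.sqrt (p i) * (a i - ma)) * (Real.sqrt (p i) * (b i - mb)) := hcov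
    _ ≤ Real.sqrt X * Real.sqrt Y := h4
    _ ≤ Real.sqrt ((1/2) * ∑ i, a i ^ 2) * Real.sqrt ((1/2) * ∑ i, b i ^ 2) :=
        mul_le_mul hXb hYb (Real.sqrt_nonneg _) (Real.sqrt_nonneg _)
    _ = (1/2) * (Real.sqrt (∑ i, a i ^ 2) * Real.sqrt (∑ i, b i ^ 2)) := hfin

lemma stmt2_key {d : ℕ} (hd : 0 < d) (v δ w : Fin d → ℝ) :
    (∑ i, Real.exp (v i + δ i) * w i) / (∑ j, Real.exp (v j + δ j))
      - (∑ i, Real.exp (v i) * w i) / (∑ j, Real.exp (v j))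
      ≤ (1 / 2) * (Real.sqrt (∑ i, δ i ^ 2) * Real.sqrt (∑ i, w i ^ 2)) := by
  haveI : Nonempty (Fin d) := ⟨⟨0, hd⟩⟩
  have hSpos : ∀ t : ℝ, 0 < ∑ j, Real.exp (v j + t * δ j) :=
    fun t => Finset.sum_pos (fun i _ => Real.exp_pos _) Finset.univ_nonempty
  set φ : ℝ → ℝ := fun t =>
    (∑ i, Real.exp (v i + t * δ i) * w i) / (∑ j, Real.exp (v j + t * δ j)) with hφ
  set D : ℝ → ℝ := fun t =>
    ((∑ i, Real.exp (v i + t * δ i) * δ i * w i) * (∑ j, Real.exp (v j + t * δ j))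
      - (∑ i, Real.exp (v i + t * δ i) * w i) * (∑ j, Real.exp (v j + t * δ j) * δ j))
      / (∑ j, Real.exp (v j + t * δ j)) ^ 2 with hD
  have hder : ∀ t : ℝ, HasDerivAt φ (D t) t := by
    intro t
    have hN : HasDerivAt (fun t => ∑ i, Real.exp (v i + t * δ i) * w i)
        (∑ i, Real.exp (v i + t * δ i) * δ i * w i) t := by
      apply HasDerivAt.fun_sum
      intro i _
      exact (((hasDerivAt_mul_const (δ i)).const_add (v i)).exp).mul_const (w i)
    have hS : HasDerivAt (fun t => ∑ j, Real.exp (v j + t * δ j))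
        (∑ j, Real.exp (v j + t * δ j) * δ j) t := by
      apply HasDerivAt.fun_sum
      intro j _
      exact ((hasDerivAt_mul_const (δ j)).const_add (v j)).exp
    exact hN.div hS (hSpos t).ne'
  obtain ⟨c, -, hceq⟩ := exists_hasDerivAt_eq_slope φ D one_pos
    (fun t _ => (hder t).continuousAt.continuousWithinAt) (fun t _ => hder t)
  have hφ1 : φ 1 = (∑ i, Real.exp (v i + δ i) * w i) / (∑ j, Real.exp (v j + δ j)) := by
    rw [hφ]; simp
  have hφ0 : φ 0 = (∑ i, Real.exp (v i) * w i) / (∑ j, Real.exp (v j)) := by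
    rw [hφ]; simp
  have hslope : φ 1 - φ 0 = D c := by
    rw [hceq]; norm_num
  rw [← hφ1, ← hφ0, hslope]
  -- Now bound D c using the covariance inequality
  set S := ∑ j, Real.exp (v j + c * δ j) with hS
  set p : Fin d → ℝ := fun i => Real.exp (v i + c * δ i) / S with hp
  have hpnn : ∀ i, 0 ≤ p i := fun i => div_nonneg (Real.exp_pos _).le (hSpos c).le
  have hp1 : ∑ i, p i = 1 := by
    rw [hp, ← Finset.sum_div, ← hS, div_self (hSpos c).ne']
  have hcov := stmt2_cov_le hd p δ w hpnn hp1
  have hDc : D c = (∑ i, p i * δ i * w i) - (∑ i, p i * δ i) * (∑ i, p i * w i) := by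
    have e1 : ∑ i, p i * δ i * w i = (∑ i, Real.exp (v i + c * δ i) * δ i * w i) / S := by
      rw [Finset.sum_div]
      exact Finset.sum_congr rfl fun i _ => by rw [hp]; ring
    have e2 : ∑ i, p i * δ i = (∑ j, Real.exp (v j + c * δ j) * δ j) / S := by
      rw [Finset.sum_div]
      exact Finset.sum_congr rfl fun i _ => by rw [hp]; ring
    have e3 : ∑ i, p i * w i = (∑ i, Real.exp (v i + c * δ i) * w i) / S := by
      rw [Finset.sum_div]
      exact Finset.sum_congr rfl fun i _ => by rw [hp]; ring
    have hSne : S ≠ 0 := (hS ▸ (hSpos c).ne')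
    have key : ∀ x y z s : ℝ, s ≠ 0 → (x * s - y * z) / s ^ 2 = x / s - z / s * (y / s) := by
      intro x y z s hs; field_simp
    rw [e1, e2, e3]
    simp only [hD]
    rw [← hS]
    exact key _ _ _ _ hSne
  rw [hDc]
  exact hcov

lemma stmt2_hasGradientAt {d : ℕ} (hd : 0 < d) (z : EuclideanSpace ℝ (Fin d)) :
    HasGradientAt (fun z : EuclideanSpace ℝ (Fin d) => Real.log (∑ i, Real.exp (z i)))
      (WithLp.toLp 2 (fun i => Real.exp (z i) / ∑ j, Real.exp (z j) : Fin d → ℝ) :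
        EuclideanSpace ℝ (Fin d)) z := by
  haveI : Nonempty (Fin d) := ⟨⟨0, hd⟩⟩
  have hS : (0:ℝ) < ∑ j, Real.exp (z j) :=
    Finset.sum_pos (fun i _ => Real.exp_pos _) Finset.univ_nonempty
  have h1 : HasFDerivAt (fun z : EuclideanSpace ℝ (Fin d) => ∑ i, Real.exp (z i))
      (∑ i, Real.exp (z i) • (EuclideanSpace.proj i : EuclideanSpace ℝ (Fin d) →L[ℝ] ℝ)) z := by
    apply HasFDerivAt.fun_sum
    intro i _
    exact ((EuclideanSpace.proj i : EuclideanSpace ℝ (Fin d) →L[ℝ] ℝ).hasFDerivAt (x := z)).exp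
  have h2 : HasFDerivAt (fun z : EuclideanSpace ℝ (Fin d) => Real.log (∑ i, Real.exp (z i)))
      ((∑ j, Real.exp (z j))⁻¹ •
        ∑ i, Real.exp (z i) • (EuclideanSpace.proj i : EuclideanSpace ℝ (Fin d) →L[ℝ] ℝ)) z :=
    h1.log hS.ne'
  rw [hasGradientAt_iff_hasFDerivAt]
  have heq : (InnerProductSpace.toDual ℝ (EuclideanSpace ℝ (Fin d)))
      (WithLp.toLp 2 (fun i => Real.exp (z i) / ∑ j, Real.exp (z j) : Fin d → ℝ) : EuclideanSpace ℝ (Fin d))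
      = (∑ j, Real.exp (z j))⁻¹ •
        ∑ i, Real.exp (z i) • (EuclideanSpace.proj i : EuclideanSpace ℝ (Fin d) →L[ℝ] ℝ) := by
    apply ContinuousLinearMap.ext
    intro y
    simp only [InnerProductSpace.toDual_apply_apply, PiLp.toLp_apply, PiLp.inner_apply, RCLike.inner_apply,
      conj_trivial, ContinuousLinearMap.smul_apply, ContinuousLinearMap.sum_apply,
      PiLp.proj_apply, smul_eq_mul]
    rw [Finset.mul_sum]
    exact Finset.sum_congr rfl fun i _ => by ring
  rw [heq]
  exact h2

lemma stmt2_lip {d : ℕ} (hd : 0 < d) (u v : EuclideanSpace ℝ (Fin d)) :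
    ‖gradient (fun z : EuclideanSpace ℝ (Fin d) => Real.log (∑ i, Real.exp (z i))) u
      - gradient (fun z : EuclideanSpace ℝ (Fin d) => Real.log (∑ i, Real.exp (z i))) v‖
      ≤ (1 / 2) * ‖u - v‖ := by
  set w : Fin d → ℝ := fun i =>
    Real.exp (u i) / (∑ j, Real.exp (u j)) - Real.exp (v i) / (∑ j, Real.exp (v j)) with hw
  set δ : Fin d → ℝ := fun i => u i - v i with hδ
  have hgu := (stmt2_hasGradientAt hd u).gradient
  have hgv := (stmt2_hasGradientAt hd v).gradient
  have hnorm1 : ‖gradient (fun z : EuclideanSpace ℝ (Fin d) => Real.log (∑ i, Real.exp (z i))) u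
      - gradient (fun z : EuclideanSpace ℝ (Fin d) => Real.log (∑ i, Real.exp (z i))) v‖
      = Real.sqrt (∑ i, w i ^ 2) := by
    rw [hgu, hgv, EuclideanSpace.norm_eq]
    congr 1
    refine Finset.sum_congr rfl fun i _ => ?_
    rw [hw]
    norm_num [Real.norm_eq_abs, sq_abs, PiLp.toLp_apply]
  have hnorm2 : ‖u - v‖ = Real.sqrt (∑ i, δ i ^ 2) := by
    rw [EuclideanSpace.norm_eq]
    congr 1
    refine Finset.sum_congr rfl fun i _ => ?_
    rw [hδ]
    norm_num [Real.norm_eq_abs, sq_abs]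
  have hkey := stmt2_key hd v δ w
  have hrw1 : ∀ i, v i + δ i = u i := fun i => by rw [hδ]; ring
  have hsum : (∑ i, Real.exp (u i) * w i) / (∑ j, Real.exp (u j))
      - (∑ i, Real.exp (v i) * w i) / (∑ j, Real.exp (v j)) = ∑ i, w i ^ 2 := by
    rw [Finset.sum_div, Finset.sum_div, ← Finset.sum_sub_distrib]
    refine Finset.sum_congr rfl fun i _ => ?_
    rw [hw]
    ring
  simp_rw [hrw1] at hkey
  rw [hsum] at hkey
  -- hkey : ∑ w^2 ≤ 1/2 * (√∑δ² * √∑w²)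
  rw [hnorm1, hnorm2]
  set W := Real.sqrt (∑ i, w i ^ 2) with hW
  set Δ := Real.sqrt (∑ i, δ i ^ 2) with hΔ
  have hWsq : W ^ 2 = ∑ i, w i ^ 2 :=
    Real.sq_sqrt (Finset.sum_nonneg fun i _ => sq_nonneg _)
  rcases eq_or_lt_of_le (Real.sqrt_nonneg (∑ i, w i ^ 2)) with h0 | h0
  · rw [hW, ← h0]
    positivity
  · rw [← hW] at h0
    have : W ^ 2 ≤ 1 / 2 * (Δ * W) := by rw [hWsq]; exact hkey
    nlinarith

lemma stmt2_convex {d : ℕ} (hd : 0 < d) :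
    ConvexOn ℝ Set.univ
      (fun z : EuclideanSpace ℝ (Fin d) => Real.log (∑ i, Real.exp (z i))) := by
  haveI : Nonempty (Fin d) := ⟨⟨0, hd⟩⟩
  refine ⟨convex_univ, ?_⟩
  intro x _ y _ a b ha hb hab
  set A := ∑ i, Real.exp (x i) with hA
  set B := ∑ i, Real.exp (y i) with hB
  have hApos : 0 < A := Finset.sum_pos (fun i _ => Real.exp_pos _) Finset.univ_nonempty
  have hBpos : 0 < B := Finset.sum_pos (fun i _ => Real.exp_pos _) Finset.univ_nonempty
  have happ : ∀ i, (a • x + b • y) i = a * x i + b * y i := fun i => rfl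
  have hterm : ∀ i ∈ Finset.univ, Real.exp ((a • x + b • y) i)
      ≤ (A ^ a * B ^ b) * (a * (Real.exp (x i) / A) + b * (Real.exp (y i) / B)) := by
    intro i _
    rw [happ i, Real.exp_add, mul_comm a (x i), mul_comm b (y i), Real.exp_mul, Real.exp_mul]
    have hxa : Real.exp (x i) ^ a = A ^ a * (Real.exp (x i) / A) ^ a := by
      rw [← Real.mul_rpow hApos.le (by positivity), mul_div_cancel₀ _ hApos.ne']
    have hyb : Real.exp (y i) ^ b = B ^ b * (Real.exp (y i) / B) ^ b := by
      rw [← Real.mul_rpow hBpos.le (by positivity), mul_div_cancel₀ _ hBpos.ne']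
    rw [hxa, hyb]
    have hgm : (Real.exp (x i) / A) ^ a * (Real.exp (y i) / B) ^ b
        ≤ a * (Real.exp (x i) / A) + b * (Real.exp (y i) / B) :=
      Real.geom_mean_le_arith_mean2_weighted ha hb (by positivity) (by positivity) hab
    calc A ^ a * (Real.exp (x i) / A) ^ a * (B ^ b * (Real.exp (y i) / B) ^ b)
        = (A ^ a * B ^ b) * ((Real.exp (x i) / A) ^ a * (Real.exp (y i) / B) ^ b) := by ring
      _ ≤ (A ^ a * B ^ b) * (a * (Real.exp (x i) / A) + b * (Real.exp (y i) / B)) := by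
          apply mul_le_mul_of_nonneg_left hgm
          positivity
  have hsum : ∑ i, Real.exp ((a • x + b • y) i) ≤ A ^ a * B ^ b := by
    calc ∑ i, Real.exp ((a • x + b • y) i)
        ≤ ∑ i, (A ^ a * B ^ b) * (a * (Real.exp (x i) / A) + b * (Real.exp (y i) / B)) :=
          Finset.sum_le_sum hterm
      _ = A ^ a * B ^ b := by
          rw [← Finset.mul_sum, Finset.sum_add_distrib, ← Finset.mul_sum, ← Finset.mul_sum,
            ← Finset.sum_div, ← Finset.sum_div, ← hA, ← hB, div_self hApos.ne',
            div_self hBpos.ne']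
          rw [mul_one, mul_one, hab, mul_one]
  have hpos : 0 < ∑ i, Real.exp ((a • x + b • y) i) :=
    Finset.sum_pos (fun i _ => Real.exp_pos _) Finset.univ_nonempty
  calc Real.log (∑ i, Real.exp ((a • x + b • y) i))
      ≤ Real.log (A ^ a * B ^ b) := Real.log_le_log hpos hsum
    _ = a * Real.log A + b * Real.log B := by
        rw [Real.log_mul (Real.rpow_pos_of_pos hApos a).ne' (Real.rpow_pos_of_pos hBpos b).ne',
          Real.log_rpow hApos, Real.log_rpow hBpos]
    _ = a • Real.log A + b • Real.log B := by simp

/-- The log-sum-exp function `g z = log (∑ i, exp (z i))` on `ℝ^d`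
is convex and `1/2`-smooth: its gradient is `(1/2)`-Lipschitz for the
Euclidean norm. -/
theorem stmt_2 {d : ℕ} :
    ConvexOn ℝ Set.univ
      (fun z : EuclideanSpace ℝ (Fin d) => Real.log (∑ i, Real.exp (z i)))
    ∧ ∀ u v : EuclideanSpace ℝ (Fin d),
      ‖gradient (fun z : EuclideanSpace ℝ (Fin d) =>
          Real.log (∑ i, Real.exp (z i))) u
        - gradient (fun z : EuclideanSpace ℝ (Fin d) =>
          Real.log (∑ i, Real.exp (z i))) v‖ ≤ (1 / 2) * ‖u - v‖ := by
  constructor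
  · rcases Nat.eq_zero_or_pos d with h | h
    · subst h
      have heq : (fun z : EuclideanSpace ℝ (Fin 0) => Real.log (∑ i, Real.exp (z i)))
          = fun _ => (0 : ℝ) := by
        funext z; simp
      rw [heq]
      exact convexOn_const 0 convex_univ
    · exact stmt2_convex h
  · intro u v
    rcases Nat.eq_zero_or_pos d with h | h
    · subst h
      have huv : u = v := PiLp.ext fun i => Fin.elim0 i
      rw [huv, sub_self, norm_zero]
      positivity
    · exact stmt2_lip h u v
end

section
/- Eckart–Young theorem: for any m × m' complex matrix X of rank r and any q ≤ r, the rank-q truncated SVD X̂_q = U_q S_q V_q^T minimizes the Frobenius norm error ‖X - B‖_F over all m × m' matrices B of rank at most q; that is, ‖X - X̂_q‖_F ≤ ‖X - B‖_F for all B with rank(B) ≤ q. -/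
set_option maxHeartbeats 1000000


open Matrix Finset

noncomputable instance (priority := 10000) auxInner {m : ℕ} (K : Submodule ℂ (EuclideanSpace ℂ (Fin m))) : Inner ℂ K := (Submodule.innerProductSpace K).toInner

lemma exists_W {m m' q : ℕ} (B : Matrix (Fin m) (Fin m') ℂ) (hB : B.rank ≤ q) :
    ∃ (d : ℕ) (W : Matrix (Fin m) (Fin d) ℂ), d ≤ q ∧ Wᴴ * W = 1 ∧ (W * Wᴴ) * B = B := by
  classical
  let e : (Fin m → ℂ) ≃ₗ[ℂ] EuclideanSpace ℂ (Fin m) :=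
    (WithLp.linearEquiv 2 ℂ (Fin m → ℂ)).symm
  let K : Submodule ℂ (EuclideanSpace ℂ (Fin m)) := (LinearMap.range B.mulVecLin).map (e : (Fin m → ℂ) →ₗ[ℂ] EuclideanSpace ℂ (Fin m))
  have hdK : Module.finrank ℂ K ≤ q :=
    le_trans (le_of_eq (LinearEquiv.finrank_map_eq e _)) hB
  set d := Module.finrank ℂ K with hd
  let b : OrthonormalBasis (Fin d) ℂ K := stdOrthonormalBasis ℂ K
  have hecoe : ∀ (y : Fin m → ℂ) (i : Fin m), e y i = y i := fun _ _ => rfl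
  have hinnerE : ∀ (u v : K), (inner ℂ u v : ℂ) = ∑ i, (starRingEnd ℂ) ((u : EuclideanSpace ℂ (Fin m)) i) * (v : EuclideanSpace ℂ (Fin m)) i := by
    intro u v
    rw [Submodule.coe_inner, PiLp.inner_apply]
    simp [RCLike.inner_apply, mul_comm]
  refine ⟨d, Matrix.of (fun i k => (b k : EuclideanSpace ℂ (Fin m)) i), hdK, ?_, ?_⟩
  · ext k l
    have hb := b.orthonormal
    rw [orthonormal_iff_ite] at hb
    have h1 := hb k l
    rw [hinnerE] at h1
    simp only [starRingEnd_apply] at h1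
    simpa [Matrix.mul_apply, Matrix.one_apply] using h1
  · ext i j
    have hcol : e (B.mulVec (Pi.single j 1)) ∈ K :=
      Submodule.mem_map_of_mem (LinearMap.mem_range_self _ _)
    set x : K := ⟨e (B.mulVec (Pi.single j 1)), hcol⟩ with hx
    have hval : ∀ i, (x : EuclideanSpace ℂ (Fin m)) i = B i j := by
      intro i
      show e (B.mulVec (Pi.single j 1)) i = B i j
      rw [hecoe, Matrix.mulVec_single]
      exact mul_one _
    have hinner : ∀ k, b.repr x k = ∑ i', star ((b k : EuclideanSpace ℂ (Fin m)) i') * B i' j := by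
      intro k
      rw [b.repr_apply_apply, hinnerE]
      exact Finset.sum_congr rfl fun i' _ => by rw [hval, starRingEnd_apply]
    have hxE : (x : EuclideanSpace ℂ (Fin m)) = ∑ k, b.repr x k • ((b k : EuclideanSpace ℂ (Fin m))) := by
      conv_lhs => rw [← b.sum_repr x]
      rw [Submodule.coe_sum]
      simp
    have hptwise : (x : EuclideanSpace ℂ (Fin m)) i = ∑ k, b.repr x k • ((b k : EuclideanSpace ℂ (Fin m)) i) := by
      rw [hxE, WithLp.ofLp_sum, Finset.sum_apply]
      rfl
    calc ((Matrix.of (fun i k => (b k : EuclideanSpace ℂ (Fin m)) i) * (Matrix.of (fun i k => (b k : EuclideanSpace ℂ (Fin m)) i))ᴴ) * B) i j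
        = ∑ k, (b.repr x k) • (b k : EuclideanSpace ℂ (Fin m)) i := by
          simp only [Matrix.mul_apply, Matrix.conjTranspose_apply, Matrix.of_apply,
            Finset.sum_mul]
          rw [Finset.sum_comm]
          refine Finset.sum_congr rfl fun k _ => ?_
          rw [hinner k, smul_eq_mul, Finset.sum_mul]
          exact Finset.sum_congr rfl fun i' _ => by ring
      _ = B i j := by rw [← hptwise, hval]


noncomputable def sqF {a b : ℕ} (M : Matrix (Fin a) (Fin b) ℂ) : ℝ :=
  ∑ i, ∑ j, ‖M i j‖ ^ 2

lemma sqF_nonneg {a b : ℕ} (M : Matrix (Fin a) (Fin b) ℂ) : 0 ≤ sqF M :=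
  Finset.sum_nonneg fun _ _ => Finset.sum_nonneg fun _ _ => sq_nonneg _

lemma sqF_eq_trace {a b : ℕ} (M : Matrix (Fin a) (Fin b) ℂ) :
    sqF M = (Matrix.trace (Mᴴ * M)).re := by
  rw [Matrix.trace]
  simp only [Matrix.diag_apply, Matrix.mul_apply, Matrix.conjTranspose_apply]
  rw [Complex.re_sum]
  rw [sqF, Finset.sum_comm]
  refine Finset.sum_congr rfl fun j _ => ?_
  rw [Complex.re_sum]
  refine Finset.sum_congr rfl fun i _ => ?_
  rw [show (star (M i j)) = (starRingEnd ℂ) (M i j) from rfl, ← Complex.normSq_eq_conj_mul_self]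
  simp only [Complex.normSq_eq_norm_sq]
  norm_cast
  
lemma sqF_unitary_left {a b : ℕ} (U : Matrix (Fin a) (Fin a) ℂ)
    (hU : Uᴴ * U = 1) (A : Matrix (Fin a) (Fin b) ℂ) : sqF (U * A) = sqF A := by
  rw [sqF_eq_trace, sqF_eq_trace, Matrix.conjTranspose_mul, Matrix.mul_assoc,
    ← Matrix.mul_assoc Uᴴ, hU, Matrix.one_mul]

lemma sqF_conjTranspose {a b : ℕ} (M : Matrix (Fin a) (Fin b) ℂ) : sqF Mᴴ = sqF M := by
  rw [sqF, Finset.sum_comm, sqF]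
  simp [Matrix.conjTranspose_apply]

lemma sqF_unitary_right {a b : ℕ} (V : Matrix (Fin b) (Fin b) ℂ)
    (hV : V * Vᴴ = 1) (A : Matrix (Fin a) (Fin b) ℂ) : sqF (A * V) = sqF A := by
  rw [← sqF_conjTranspose (A * V), Matrix.conjTranspose_mul, sqF_unitary_left,
    sqF_conjTranspose]
  rwa [Matrix.conjTranspose_conjTranspose]

lemma sqF_split {a b : ℕ} (P : Matrix (Fin a) (Fin a) ℂ) (hP : Pᴴ = P)
    (hPP : P * P = P) (M : Matrix (Fin a) (Fin b) ℂ) :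
    sqF M = sqF (P * M) + sqF ((1 - P) * M) := by
  have h1 : (P * M)ᴴ * (P * M) = Mᴴ * (P * M) := by
    rw [Matrix.conjTranspose_mul, hP, Matrix.mul_assoc, ← Matrix.mul_assoc P P M, hPP]
  have h2 : ((1 - P) * M)ᴴ * ((1 - P) * M) = Mᴴ * ((1 - P) * M) := by
    rw [Matrix.conjTranspose_mul, Matrix.conjTranspose_sub, Matrix.conjTranspose_one, hP,
      Matrix.mul_assoc, ← Matrix.mul_assoc (1 - P) (1 - P) M]
    congr 2
    rw [Matrix.sub_mul, Matrix.one_mul, Matrix.mul_sub, hPP, Matrix.mul_one]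
    abel
  rw [sqF_eq_trace, sqF_eq_trace, sqF_eq_trace, h1, h2, ← Complex.add_re, ← Matrix.trace_add,
    ← Matrix.mul_add]
  have h3 : P * M + (1 - P) * M = M := by
    rw [Matrix.sub_mul, Matrix.one_mul]
    abel
  rw [h3]

lemma col_sq {a b : ℕ} (M : Matrix (Fin a) (Fin b) ℂ) (k : Fin b) :
    ∑ i, ‖M i k‖ ^ 2 = ((Mᴴ * M) k k).re := by
  simp only [Matrix.mul_apply, Matrix.conjTranspose_apply]
  rw [Complex.re_sum]
  refine Finset.sum_congr rfl fun i _ => ?_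
  rw [show (star (M i k)) = (starRingEnd ℂ) (M i k) from rfl, ← Complex.normSq_eq_conj_mul_self]
  simp only [Complex.normSq_eq_norm_sq]
  norm_cast

lemma mem_map_castLE {m m' : ℕ} (h : m ≤ m') (j : Fin m') :
    j ∈ Finset.map (Fin.castLEEmb h) Finset.univ ↔ (j : ℕ) < m := by
  simp only [Finset.mem_map, Finset.mem_univ, true_and]
  constructor
  · rintro ⟨k, rfl⟩; exact k.2
  · intro hj; exact ⟨⟨j, hj⟩, rfl⟩

lemma sum_castLE {m m' : ℕ} (h : m ≤ m') (f : Fin m' → ℝ)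
    (h0 : ∀ j : Fin m', m ≤ (j : ℕ) → f j = 0) :
    ∑ j, f j = ∑ k : Fin m, f (Fin.castLE h k) := by
  show ∑ j : Fin m', f j = ∑ k : Fin m, f (Fin.castLEEmb h k)
  rw [← Finset.sum_map Finset.univ (Fin.castLEEmb h) f]
  refine (Finset.sum_subset (Finset.subset_univ _) ?_).symm
  intro j _ hj
  exact h0 j (le_of_not_gt (fun hc => hj ((mem_map_castLE h j).mpr hc)))

lemma sqF_mul_diag {m m' : ℕ} (h : m ≤ m') (A : Matrix (Fin m) (Fin m) ℂ) (c : Fin m → ℂ) :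
    sqF (A * Matrix.of (fun (i : Fin m) (j : Fin m') => if (i : ℕ) = (j : ℕ) then c i else 0))
      = ∑ k, ‖c k‖ ^ 2 * ∑ i, ‖A i k‖ ^ 2 := by
  rw [sqF, Finset.sum_comm]
  rw [sum_castLE h (fun j => ∑ i, ‖(A * Matrix.of (fun (i : Fin m) (j : Fin m') => if (i : ℕ) = (j : ℕ) then c i else 0)) i j‖ ^ 2)]
  · refine Finset.sum_congr rfl fun k _ => ?_
    have hentry : ∀ i, (A * Matrix.of (fun (i : Fin m) (j : Fin m') => if (i : ℕ) = (j : ℕ) then c i else 0)) i (Fin.castLE h k) = A i k * c k := by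
      intro i
      rw [Matrix.mul_apply]
      rw [Finset.sum_eq_single k]
      · simp [Fin.castLE]
      · intro k' _ hk'
        simp only [Matrix.of_apply, Fin.coe_castLE]
        rw [if_neg (fun hc => hk' (Fin.ext hc)), mul_zero]
      · simp
    rw [Finset.mul_sum]
    refine Finset.sum_congr rfl fun i _ => ?_
    rw [hentry i, norm_mul, mul_pow]
    ring
  · intro j hj
    refine Finset.sum_eq_zero fun i _ => ?_
    have : (A * Matrix.of (fun (i : Fin m) (j : Fin m') => if (i : ℕ) = (j : ℕ) then c i else 0)) i j = 0 := by
      rw [Matrix.mul_apply]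
      refine Finset.sum_eq_zero fun k _ => ?_
      simp only [Matrix.of_apply]
      rw [if_neg, mul_zero]
      omega
    rw [this]
    simp

lemma card_filter_lt_q {m q : ℕ} (hqm : q ≤ m) :
    (Finset.univ.filter (fun k : Fin m => (k : ℕ) < q)).card = q := by
  have : Finset.univ.filter (fun k : Fin m => (k : ℕ) < q)
      = Finset.map (Fin.castLEEmb hqm) Finset.univ := by
    ext j
    simp only [Finset.mem_filter, Finset.mem_univ, true_and]
    rw [mem_map_castLE hqm j]
  rw [this, Finset.card_map, Finset.card_univ, Fintype.card_fin]

lemma key_sum {m q : ℕ} (hqm : q ≤ m) (s c : Fin m → ℝ) (hs0 : ∀ i, 0 ≤ s i)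
    (hdesc : ∀ i j : Fin m, i ≤ j → s j ≤ s i) (hc0 : ∀ k, 0 ≤ c k) (hc1 : ∀ k, c k ≤ 1)
    (hcsum : ∑ k, c k ≤ q) :
    ∑ k : Fin m, (if (k : ℕ) < q then 0 else (s k) ^ 2) ≤ ∑ k, (s k) ^ 2 - ∑ k, (s k) ^ 2 * c k := by
  classical
  set σ : ℝ := if h : q < m then s ⟨q, h⟩ else 0 with hσ
  have hσ0 : 0 ≤ σ := by
    rw [hσ]; split
    · exact hs0 _
    · exact le_refl 0
  have hσ_le : ∀ k : Fin m, (k : ℕ) < q → σ ≤ s k := by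
    intro k hk
    rw [hσ]
    split
    · exact hdesc k ⟨q, ‹q < m›⟩ (by simp [Fin.le_def]; omega)
    · exact hs0 k
  have hle_σ : ∀ k : Fin m, q ≤ (k : ℕ) → s k ≤ σ := by
    intro k hk
    have hqm' : q < m := lt_of_le_of_lt hk k.2
    rw [hσ, dif_pos hqm']
    exact hdesc ⟨q, hqm'⟩ k (by simp [Fin.le_def]; omega)
  set A := Finset.univ.filter (fun k : Fin m => (k : ℕ) < q) with hA
  have hAc : Finset.univ.filter (fun k : Fin m => ¬ (k : ℕ) < q) = Aᶜ := by
    rw [hA, Finset.compl_filter]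
  -- rewrite LHS
  have hLHS : ∑ k : Fin m, (if (k : ℕ) < q then 0 else (s k) ^ 2)
      = ∑ k ∈ Aᶜ, (s k) ^ 2 := by
    rw [← hAc, Finset.sum_filter]
    refine Finset.sum_congr rfl fun k _ => ?_
    by_cases h : (k : ℕ) < q <;> simp [h]
  have hsplit : ∀ f : Fin m → ℝ, ∑ k, f k = ∑ k ∈ A, f k + ∑ k ∈ Aᶜ, f k := by
    intro f
    rw [Finset.sum_add_sum_compl]
  rw [hLHS]
  have h1 : ∑ k ∈ Aᶜ, (s k) ^ 2 * c k ≤ σ ^ 2 * ∑ k ∈ Aᶜ, c k := by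
    rw [Finset.mul_sum]
    refine Finset.sum_le_sum fun k hk => ?_
    have hk' : q ≤ (k : ℕ) := by
      rw [Finset.mem_compl, hA] at hk
      simp at hk
      omega
    exact mul_le_mul_of_nonneg_right (pow_le_pow_left₀ (hs0 k) (hle_σ k hk') 2) (hc0 k)
  have h2 : σ ^ 2 * ∑ k ∈ A, (1 - c k) ≤ ∑ k ∈ A, (s k) ^ 2 * (1 - c k) := by
    rw [Finset.mul_sum]
    refine Finset.sum_le_sum fun k hk => ?_
    have hk' : (k : ℕ) < q := by
      rw [hA] at hk; simp at hk; exact hk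
    exact mul_le_mul_of_nonneg_right (pow_le_pow_left₀ hσ0 (hσ_le k hk') 2)
      (by linarith [hc1 k])
  have h3 : ∑ k ∈ Aᶜ, c k ≤ ∑ k ∈ A, (1 - c k) := by
    rw [Finset.sum_sub_distrib, Finset.sum_const, card_filter_lt_q hqm]
    have := hsplit c
    simp only [nsmul_eq_mul, mul_one]
    linarith
  have h4 : ∑ k ∈ Aᶜ, (s k) ^ 2 * c k ≤ ∑ k ∈ A, (s k) ^ 2 * (1 - c k) := by
    calc ∑ k ∈ Aᶜ, (s k) ^ 2 * c k ≤ σ ^ 2 * ∑ k ∈ Aᶜ, c k := h1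
      _ ≤ σ ^ 2 * ∑ k ∈ A, (1 - c k) := by
          exact mul_le_mul_of_nonneg_left h3 (sq_nonneg σ)
      _ ≤ ∑ k ∈ A, (s k) ^ 2 * (1 - c k) := h2
  have e1 := hsplit (fun k => (s k) ^ 2)
  have e2 := hsplit (fun k => (s k) ^ 2 * c k)
  have e3 : ∑ k ∈ A, (s k) ^ 2 * (1 - c k) = ∑ k ∈ A, (s k) ^ 2 - ∑ k ∈ A, (s k) ^ 2 * c k := by
    rw [← Finset.sum_sub_distrib]
    exact Finset.sum_congr rfl fun k _ => by ring
  have e4 : 0 ≤ ∑ k ∈ Aᶜ, (s k) ^ 2 * c k :=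
    Finset.sum_nonneg fun k _ => mul_nonneg (sq_nonneg _) (hc0 k)
  linarith

lemma diag_re_le_one {a : ℕ} (Q : Matrix (Fin a) (Fin a) ℂ) (hQh : Qᴴ = Q)
    (hQQ : Q * Q = Q) (k : Fin a) : (Q k k).re ≤ 1 := by
  have hstar : ∀ i, star (Q i k) = Q k i := by
    intro i
    conv_rhs => rw [← hQh]
    rw [Matrix.conjTranspose_apply]
  have hdiag : Q k k = ∑ i, star (Q i k) * Q i k := by
    conv_lhs => rw [← hQQ]
    rw [Matrix.mul_apply]
    exact Finset.sum_congr rfl fun i _ => by rw [hstar]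
  have hre : (Q k k).re = ∑ i, ‖Q i k‖ ^ 2 := by
    rw [hdiag, Complex.re_sum]
    refine Finset.sum_congr rfl fun i _ => ?_
    rw [show (star (Q i k)) = (starRingEnd ℂ) (Q i k) from rfl, ← Complex.normSq_eq_conj_mul_self]
    simp only [Complex.normSq_eq_norm_sq]
    norm_cast
  have h1 : ‖Q k k‖ ^ 2 ≤ ∑ i, ‖Q i k‖ ^ 2 :=
    Finset.single_le_sum (fun i _ => sq_nonneg ‖Q i k‖) (Finset.mem_univ k)
  have h2 : |(Q k k).re| ≤ ‖Q k k‖ := Complex.abs_re_le_norm _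
  have h3 : 0 ≤ (Q k k).re := hre ▸ Finset.sum_nonneg fun i _ => sq_nonneg _
  have h4 : (Q k k).re ^ 2 ≤ ‖Q k k‖ ^ 2 := by
    rw [← sq_abs ((Q k k).re)]
    exact pow_le_pow_left₀ (abs_nonneg _) h2 2
  have h5 : (Q k k).re ^ 2 ≤ (Q k k).re := le_trans h4 (le_of_le_of_eq h1 hre.symm)
  nlinarith [h5]


/-- The Frobenius norm of a complex matrix. -/
noncomputable def frobNorm {m m' : ℕ} (Y : Matrix (Fin m) (Fin m') ℂ) : ℝ :=
  Real.sqrt (∑ i, ∑ j, ‖Y i j‖ ^ 2)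

/-- Eckart–Young: for a complex `m × m'` matrix `X` of rank `r`
with SVD `X = U S Vᴴ` (`U`, `V` unitary, singular values `s` nonnegative and
descending), and any `q ≤ r`, the rank-`q` truncation `X̂_q = U S_q Vᴴ`
minimizes the Frobenius-norm error among all matrices of rank at most `q`. -/
theorem stmt_3 {m m' : ℕ} (hmm' : m ≤ m')
    (X : Matrix (Fin m) (Fin m') ℂ)
    (U : Matrix (Fin m) (Fin m) ℂ) (V : Matrix (Fin m') (Fin m') ℂ)
    (hU : U ∈ Matrix.unitaryGroup (Fin m) ℂ)
    (hV : V ∈ Matrix.unitaryGroup (Fin m') ℂ)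
    (s : Fin m → ℝ) (hs0 : ∀ i, 0 ≤ s i)
    (hsdesc : ∀ i j : Fin m, i ≤ j → s j ≤ s i)
    (hX : X = U * (Matrix.of fun (i : Fin m) (j : Fin m') => if (i : ℕ) = (j : ℕ) then (s i : ℂ) else 0) * Vᴴ)
    (r q : ℕ) (hr : X.rank = r) (hq : q ≤ r) :
    ∀ B : Matrix (Fin m) (Fin m') ℂ, B.rank ≤ q →
      frobNorm (X - U * (Matrix.of fun (i : Fin m) (j : Fin m') =>
          if (i : ℕ) = (j : ℕ) ∧ (i : ℕ) < q then (s i : ℂ) else 0) * Vᴴ)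
        ≤ frobNorm (X - B) := by
  intro B hB
  classical
  have hU1 : Uᴴ * U = 1 := by
    have h := hU.1
    rwa [Matrix.star_eq_conjTranspose] at h
  have hU2 : U * Uᴴ = 1 := by
    have h := hU.2
    rwa [Matrix.star_eq_conjTranspose] at h
  have hV1 : Vᴴ * V = 1 := by
    have h := hV.1
    rwa [Matrix.star_eq_conjTranspose] at h
  have hV2 : V * Vᴴ = 1 := by
    have h := hV.2
    rwa [Matrix.star_eq_conjTranspose] at h
  have hVH2 : Vᴴ * Vᴴᴴ = 1 := by rwa [Matrix.conjTranspose_conjTranspose]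
  have hqm : q ≤ m := hq.trans (hr ▸ Matrix.rank_le_height X)
  obtain ⟨d, W, hdq, hWW, hPB⟩ := exists_W B hB
  set P : Matrix (Fin m) (Fin m) ℂ := W * Wᴴ with hP
  have hPh : Pᴴ = P := by
    rw [hP, Matrix.conjTranspose_mul, Matrix.conjTranspose_conjTranspose]
  have hPP : P * P = P := by
    rw [hP, Matrix.mul_assoc, ← Matrix.mul_assoc Wᴴ W Wᴴ, hWW, Matrix.one_mul]
  have hPB' : P * B = B := hPB
  set D : Matrix (Fin m) (Fin m') ℂ :=
    Matrix.of fun (i : Fin m) (j : Fin m') => if (i : ℕ) = (j : ℕ) then (s i : ℂ) else 0 with hD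
  set Dq : Matrix (Fin m) (Fin m') ℂ :=
    Matrix.of fun (i : Fin m) (j : Fin m') =>
      if (i : ℕ) = (j : ℕ) ∧ (i : ℕ) < q then (s i : ℂ) else 0 with hDq
  have hcolU : ∀ k : Fin m, ∑ i, ‖U i k‖ ^ 2 = 1 := by
    intro k
    rw [col_sq, hU1]
    simp [Matrix.one_apply]
  set c : Fin m → ℝ := fun k => ∑ i, ‖(P * U) i k‖ ^ 2 with hc
  have hc0 : ∀ k, 0 ≤ c k := fun k => Finset.sum_nonneg fun _ _ => sq_nonneg _
  have hQ : (P * U)ᴴ * (P * U) = Uᴴ * (P * U) := by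
    rw [Matrix.conjTranspose_mul, hPh, Matrix.mul_assoc, ← Matrix.mul_assoc P P U, hPP]
  have hQh : ((P * U)ᴴ * (P * U))ᴴ = (P * U)ᴴ * (P * U) := by
    rw [Matrix.conjTranspose_mul, Matrix.conjTranspose_conjTranspose]
  have hQQ : ((P * U)ᴴ * (P * U)) * ((P * U)ᴴ * (P * U)) = (P * U)ᴴ * (P * U) := by
    rw [hQ]
    calc (Uᴴ * (P * U)) * (Uᴴ * (P * U)) = Uᴴ * (P * ((U * Uᴴ) * (P * U))) := by
          noncomm_ring
      _ = Uᴴ * (P * (P * U)) := by rw [hU2, Matrix.one_mul]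
      _ = Uᴴ * (P * U) := by rw [← Matrix.mul_assoc P P U, hPP]
  have hc1 : ∀ k, c k ≤ 1 := by
    intro k
    have h := diag_re_le_one ((P * U)ᴴ * (P * U)) hQh hQQ k
    show ∑ i : Fin m, ‖(P * U) i k‖ ^ 2 ≤ 1
    rw [col_sq (P * U) k]
    exact h
  have hcsum : ∑ k, c k ≤ (q : ℝ) := by
    have h1 : ∑ k, c k = sqF (P * U) := by
      rw [sqF, Finset.sum_comm]
    have h2 : sqF (P * U) = sqF P := sqF_unitary_right U hU2 P
    have h3 : sqF P = (d : ℝ) := by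
      rw [sqF_eq_trace]
      have hPhP : Pᴴ * P = P := by rw [hPh, hPP]
      rw [hPhP, hP, Matrix.trace_mul_comm, hWW]
      simp [Matrix.trace_one]
    rw [h1, h2, h3]
    exact_mod_cast hdq
  have hsqFX : sqF X = ∑ k, (s k) ^ 2 := by
    rw [hX, sqF_unitary_right Vᴴ hVH2 (U * D), hD,
      sqF_mul_diag hmm' U (fun i => (s i : ℂ))]
    refine Finset.sum_congr rfl fun k _ => ?_
    rw [hcolU k, mul_one, Complex.norm_real, Real.norm_eq_abs, sq_abs]
  have hsqFPX : sqF (P * X) = ∑ k, (s k) ^ 2 * c k := by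
    have hassoc : P * X = ((P * U) * D) * Vᴴ := by
      rw [hX, ← Matrix.mul_assoc, ← Matrix.mul_assoc]
    rw [hassoc, sqF_unitary_right Vᴴ hVH2 ((P * U) * D), hD,
      sqF_mul_diag hmm' (P * U) (fun i => (s i : ℂ))]
    refine Finset.sum_congr rfl fun k _ => ?_
    rw [Complex.norm_real, Real.norm_eq_abs, sq_abs]
  have hXsub : X - U * Dq * Vᴴ
      = U * (Matrix.of fun (i : Fin m) (j : Fin m') =>
          if (i : ℕ) = (j : ℕ) then (if (i : ℕ) < q then 0 else (s i : ℂ)) else 0) * Vᴴ := by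
    rw [hX, ← Matrix.sub_mul, ← Matrix.mul_sub]
    congr 2
    ext i j
    simp only [Matrix.sub_apply, Matrix.of_apply, hD, hDq]
    by_cases hij : (i : ℕ) = (j : ℕ)
    · by_cases hiq : (i : ℕ) < q
      · have hjq : (j : ℕ) < q := by omega
        simp [hij, hiq, hjq]
      · have hjq : ¬ (j : ℕ) < q := by omega
        simp [hij, hiq, hjq]
    · simp [hij]
  have hLHSval : sqF (X - U * Dq * Vᴴ) = ∑ k : Fin m, (if (k : ℕ) < q then 0 else (s k) ^ 2) := by
    rw [hXsub, sqF_unitary_right Vᴴ hVH2,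
      sqF_mul_diag hmm' U (fun i => if (i : ℕ) < q then 0 else (s i : ℂ))]
    refine Finset.sum_congr rfl fun k _ => ?_
    rw [hcolU k, mul_one]
    by_cases hkq : (k : ℕ) < q
    · simp [hkq]
    · simp [hkq, Complex.norm_real, sq_abs]
  -- chain of inequalities
  have hkey := key_sum hqm s c hs0 hsdesc hc0 hc1 hcsum
  have hsplitX := sqF_split P hPh hPP X
  have hsplitXB := sqF_split P hPh hPP (X - B)
  have h1mPB : (1 - P) * (X - B) = (1 - P) * X := by
    have hz : (1 - P) * B = 0 := by
      rw [Matrix.sub_mul, Matrix.one_mul, hPB']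
      exact sub_self B
    rw [Matrix.mul_sub, hz, sub_zero]
  have hfinal : sqF (X - U * Dq * Vᴴ) ≤ sqF (X - B) := by
    rw [hLHSval]
    have hPXB : 0 ≤ sqF (P * (X - B)) := sqF_nonneg _
    rw [h1mPB] at hsplitXB
    calc (∑ k : Fin m, if (k : ℕ) < q then 0 else (s k) ^ 2)
        ≤ ∑ k, (s k) ^ 2 - ∑ k, (s k) ^ 2 * c k := hkey
      _ = sqF X - sqF (P * X) := by rw [hsqFX, hsqFPX]
      _ = sqF ((1 - P) * X) := by linarith
      _ ≤ sqF (X - B) := by linarith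
  have hfr : ∀ (Y : Matrix (Fin m) (Fin m') ℂ), frobNorm Y = Real.sqrt (sqF Y) :=
    fun Y => rfl
  rw [hfr, hfr]
  exact Real.sqrt_le_sqrt hfinal
end
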